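/- arXiv:0706.2606 — 4 statements merged into one kernel-verified Lean document; each statement's English description precedes it below -/
import Mathlib

section
/- Let ρ_{XB} be a density matrix classical on H_X. For any normalized σ_B on H_B, the L1-distance from uniform satisfies d(ρ_{XB}|B) ≤ sqrt(dim H_X) · sqrt(d_2(ρ_{XB}|σ_B)), where d_2 is the conditional L2-distance from uniform relative to σ_B. -/
open Matrix BigOperators Finset
open scoped Kronecker ComplexOrder

/-- Bit strings of length `n`. -/
abbrev BS (n : ℕ) := Fin n → ZMod 2

/-- `(-1)^(α·x)` where `α·x` is the inner product mod 2. -/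
noncomputable def sgn {n : ℕ} (α x : BS n) : ℝ :=
  if (∑ i, α i * x i) = 0 then 1 else -1

/-- Fourier transform of a matrix-valued function on the hypercube. -/
noncomputable def Ftrans {n d : ℕ} (M : BS n → Matrix (Fin d) (Fin d) ℂ) :
    BS n → Matrix (Fin d) (Fin d) ℂ :=
  fun α => ((Real.sqrt (2 ^ n) : ℂ))⁻¹ • ∑ x, (sgn α x : ℂ) • M x
/-- Trace norm (Schatten 1-norm) of a complex matrix: `tr √(Aᴴ A)`. -/
noncomputable def traceNorm {m : Type*} [Fintype m] [DecidableEq m]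
    (A : Matrix m m ℂ) : ℝ :=
  (((Matrix.posSemidef_conjTranspose_mul_self A).1.eigenvectorUnitary.1 *
      diagonal (((↑) : ℝ → ℂ) ∘ (√·) ∘ (Matrix.posSemidef_conjTranspose_mul_self A).1.eigenvalues) *
      (star (Matrix.posSemidef_conjTranspose_mul_self A).1.eigenvectorUnitary : Matrix m m ℂ)).trace).re

/-! Write the Hermitian matrix `A` as `t B t` with `t = s⁻¹` and `B = s A s`, and let `W` be the
Hermitian involution with `W A = |A|` (the sign of `A` in the functional calculus), so that
`‖A‖₁ = Re tr (W t B t)`. Cauchy–Schwarz for the Hilbert–Schmidt inner product bounds this by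
`‖t W t‖₂ ‖B‖₂`, and a second application, using `W² = 1`, gives `‖t W t‖₂² ≤ tr t⁴ = tr (s⁴)⁻¹`.
For `s = 1 ⊗ σq` this trace is `dim H_X · tr σ_B = dim H_X`. -/

namespace Matrix

section Kronecker

variable {l m α : Type*}

theorem IsHermitian.kronecker [CommRing α] [StarRing α] {A : Matrix l l α} {B : Matrix m m α}
    (hA : A.IsHermitian) (hB : B.IsHermitian) : (A ⊗ₖ B).IsHermitian := by
  rw [IsHermitian, conjTranspose_kronecker, hA.eq, hB.eq]

theorem one_kronecker_pow [Fintype l] [DecidableEq l] [Fintype m] [DecidableEq m] [CommSemiring α]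
    (M : Matrix m m α) (k : ℕ) : ((1 : Matrix l l α) ⊗ₖ M) ^ k = (1 : Matrix l l α) ⊗ₖ (M ^ k) := by
  induction k with
  | zero => simp
  | succ k ih => rw [pow_succ, ih, ← mul_kronecker_mul, Matrix.one_mul, ← pow_succ]

end Kronecker

variable {n : Type*} [Fintype n]

theorem re_trace_mul_conjTranspose_self_nonneg (X : Matrix n n ℂ) : 0 ≤ (X * Xᴴ).trace.re :=
  (Complex.nonneg_iff.mp (posSemidef_self_mul_conjTranspose X).trace_nonneg).1

variable [DecidableEq n]

theorem re_trace_mul_conjTranspose_le (X Y : Matrix n n ℂ) :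
    (Y * Xᴴ).trace.re ≤ √(X * Xᴴ).trace.re * √(Y * Yᴴ).trace.re := by
  let _ := toMatrixSeminormedAddCommGroup (1 : Matrix n n ℂ) PosSemidef.one
  let _ := toMatrixInnerProductSpace (1 : Matrix n n ℂ) PosSemidef.one
  have hinner (A B : Matrix n n ℂ) : inner ℂ A B = (B * Aᴴ).trace := by
    change (B * 1 * Aᴴ).trace = _
    rw [Matrix.mul_one]
  simpa only [norm_eq_sqrt_re_inner (𝕜 := ℂ), hinner, RCLike.re_to_complex] using
    re_inner_le_norm (𝕜 := ℂ) X Y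

theorem IsHermitian.traceNorm_eq {A : Matrix n n ℂ} (hA : A.IsHermitian) :
    traceNorm A = (cfc (fun x : ℝ => |x|) A).trace.re := by
  have hAA : Aᴴ * A = cfc (fun x : ℝ => x * x) A := by
    rw [cfc_mul (fun x : ℝ => x) (fun x : ℝ => x) A, cfc_id' ℝ A, hA.eq]
  have hsqrt : cfc Real.sqrt (cfc (fun x : ℝ => x * x) A) = cfc (fun x : ℝ => |x|) A := by
    rw [← cfc_comp' Real.sqrt (fun x : ℝ => x * x) A]
    simp only [Real.sqrt_mul_self_eq_abs]
  change ((posSemidef_conjTranspose_mul_self A).1.cfc Real.sqrt).trace.re = _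
  rw [← cfc_eq, hAA, hsqrt]

theorem IsHermitian.exists_involution_mul_eq_cfc_abs {A : Matrix n n ℂ} (hA : A.IsHermitian) :
    ∃ W : Matrix n n ℂ, W.IsHermitian ∧ W * W = 1 ∧ W * A = cfc (fun x : ℝ => |x|) A := by
  let sign : ℝ → ℝ := fun x => if x < 0 then -1 else 1
  have hcont : ContinuousOn sign (spectrum ℝ A) := A.finite_real_spectrum.continuousOn _
  refine ⟨cfc sign A, cfc_predicate sign A, ?_, ?_⟩
  · rw [← cfc_mul sign sign A, ← cfc_const_one ℝ A]
    congr 1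
    ext x
    simp only [sign]
    split_ifs <;> norm_num
  · nth_rw 2 [← cfc_id' ℝ A]
    rw [← cfc_mul sign (fun x => x) A]
    congr 1
    ext x
    simp only [sign]
    split_ifs with h
    · rw [abs_of_neg h]; ring
    · rw [abs_of_nonneg (not_lt.mp h)]; ring

theorem re_trace_sq_conj_involution_le {W t : Matrix n n ℂ} (hW : W.IsHermitian)
    (hWW : W * W = 1) (ht : t.IsHermitian) :
    ((t * W * t) ^ 2).trace.re ≤ (t ^ 4).trace.re := by
  set T := t * t
  have hT : T.IsHermitian := by rw [IsHermitian, conjTranspose_mul, ht.eq]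
  have hWTW : (W * T * W)ᴴ = W * T * W := (IsSelfAdjoint.conjugate_self hT hW).star_eq
  have htrace_sq : ((t * W * t) ^ 2).trace = (W * T * W * Tᴴ).trace := by
    rw [hT.eq, show (t * W * t) ^ 2 = t * (W * T * W * t) by simp only [sq, T, Matrix.mul_assoc],
      trace_mul_comm]
    simp only [T, Matrix.mul_assoc]
  have htrace_WTW : (W * T * W * (W * T * W)ᴴ).trace = (T * Tᴴ).trace := by
    have hsq : W * T * W * (W * T * W) = W * (T * T) * W := by
      calc W * T * W * (W * T * W) = W * T * (W * W) * T * W := by simp only [Matrix.mul_assoc]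
        _ = W * (T * T) * W := by rw [hWW, Matrix.mul_one]; simp only [Matrix.mul_assoc]
    rw [hWTW, hT.eq, hsq, trace_mul_comm, ← Matrix.mul_assoc, hWW, Matrix.one_mul]
  have ht4 : t ^ 4 = T * Tᴴ := by
    rw [hT.eq]
    simp only [T, pow_succ, pow_zero, Matrix.one_mul, Matrix.mul_assoc]
  calc ((t * W * t) ^ 2).trace.re
      ≤ √(T * Tᴴ).trace.re * √(W * T * W * (W * T * W)ᴴ).trace.re := by
        rw [htrace_sq]; exact re_trace_mul_conjTranspose_le T (W * T * W)
    _ = (t ^ 4).trace.re := by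
        rw [htrace_WTW, Real.mul_self_sqrt (re_trace_mul_conjTranspose_self_nonneg T), ht4]

theorem traceNorm_le_sqrt_trace_inv_pow_four_mul_sqrt {A s : Matrix n n ℂ} (hA : A.IsHermitian)
    (hs : s.IsHermitian) (hdet : IsUnit s.det) :
    traceNorm A ≤ √((s ^ 4)⁻¹).trace.re * √((s * A * s) ^ 2).trace.re := by
  obtain ⟨W, hW, hWW, hWA⟩ := hA.exists_involution_mul_eq_cfc_abs
  set t := s⁻¹
  set B := s * A * s
  have hM : (t * W * t)ᴴ = t * W * t := (IsSelfAdjoint.conjugate_self hW hs.inv).star_eq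
  have hB : Bᴴ = B := (IsSelfAdjoint.conjugate_self hA hs).star_eq
  have hAB : A = t * B * t := by
    simp only [t, B, ← Matrix.mul_assoc, nonsing_inv_mul s hdet, Matrix.one_mul]
    rw [Matrix.mul_assoc, mul_nonsing_inv s hdet, Matrix.mul_one]
  have htrace : (W * A).trace = (B * (t * W * t)ᴴ).trace := by
    rw [hM, hAB, show W * (t * B * t) = W * t * B * t by simp only [Matrix.mul_assoc],
      trace_mul_comm, trace_mul_comm B]
    simp only [Matrix.mul_assoc]
  calc traceNorm A = (B * (t * W * t)ᴴ).trace.re := by rw [hA.traceNorm_eq, ← hWA, htrace]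
    _ ≤ √(t * W * t * (t * W * t)ᴴ).trace.re * √(B * Bᴴ).trace.re :=
        re_trace_mul_conjTranspose_le _ _
    _ ≤ √(t ^ 4).trace.re * √(B * Bᴴ).trace.re := by
        rw [hM, ← sq]
        exact mul_le_mul_of_nonneg_right
          (Real.sqrt_le_sqrt (re_trace_sq_conj_involution_le hW hWW hs.inv)) (Real.sqrt_nonneg _)
    _ = √((s ^ 4)⁻¹).trace.re * √((s * A * s) ^ 2).trace.re := by rw [hB, ← sq, inv_pow']

end Matrix

/-- `σq` encodes `σ_B^{-1/4}`: the normalized state is `σ_B = (σq ^ 4)⁻¹`. -/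
theorem l1_le_sqrt_dim_mul_sqrt_l2_general {X : Type*} [Fintype X] [DecidableEq X] {d : ℕ}
    (P : X → ℝ)
    (ρB : X → Matrix (Fin d) (Fin d) ℂ)
    (hρ : ∀ x, (ρB x).PosSemidef)
    (σq : Matrix (Fin d) (Fin d) ℂ) (hσ : σq.PosDef)
    (hσtr : ((σq ^ 4)⁻¹).trace = 1) :
    traceNorm
        ((∑ x, Matrix.single x x (1 : ℂ) ⊗ₖ ((P x : ℂ) • ρB x))
          - (Fintype.card X : ℂ)⁻¹ •
              ((1 : Matrix X X ℂ) ⊗ₖ (∑ x, (P x : ℂ) • ρB x)))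
      ≤ Real.sqrt (Fintype.card X) *
        Real.sqrt
          (((((1 : Matrix X X ℂ) ⊗ₖ σq) *
              ((∑ x, Matrix.single x x (1 : ℂ) ⊗ₖ ((P x : ℂ) • ρB x))
                - (Fintype.card X : ℂ)⁻¹ •
                    ((1 : Matrix X X ℂ) ⊗ₖ (∑ x, (P x : ℂ) • ρB x))) *
              ((1 : Matrix X X ℂ) ⊗ₖ σq)) ^ 2).trace.re) := by
  have hPρ (x : X) : ((P x : ℂ) • ρB x).IsHermitian :=
    (hρ x).isHermitian.smul (Complex.conj_ofReal _)
  have hsingle (x : X) : (Matrix.single x x (1 : ℂ)).IsHermitian := by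
    rw [IsHermitian, conjTranspose_single, star_one]
  have hσ4 : (((1 : Matrix X X ℂ) ⊗ₖ σq) ^ 4)⁻¹.trace.re = Fintype.card X := by
    rw [one_kronecker_pow, inv_kronecker, inv_one, trace_kronecker, trace_one, hσtr, mul_one,
      Complex.natCast_re]
  rw [← hσ4]
  refine traceNorm_le_sqrt_trace_inv_pow_four_mul_sqrt ?_ (isHermitian_one.kronecker hσ.isHermitian)
    ((isUnit_iff_isUnit_det _).mp (isUnit_one.kronecker hσ.isUnit))
  exact (isSelfAdjoint_sum _ fun x _ => (hsingle x).kronecker (hPρ x)).sub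
    ((isHermitian_one.kronecker (isSelfAdjoint_sum _ fun x _ => hPρ x)).smul
      (IsSelfAdjoint.natCast _).inv₀)

/-- `d(ρ_XB|B) ≤ sqrt(dim H_X) · sqrt(d₂(ρ_XB|σ_B))` for classical-on-X states,
where `σ_B = (σq^4)⁻¹` is normalized and invertible (with inverse fourth root `σq`). -/
theorem l1_le_sqrt_dim_mul_sqrt_l2 {X : Type*} [Fintype X] [DecidableEq X] {d : ℕ}
    (P : X → ℝ) (hP0 : ∀ x, 0 ≤ P x) (hP1 : ∑ x, P x = 1)
    (ρB : X → Matrix (Fin d) (Fin d) ℂ)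
    (hρ : ∀ x, (ρB x).PosSemidef) (hρtr : ∀ x, (ρB x).trace = 1)
    (σq : Matrix (Fin d) (Fin d) ℂ) (hσ : σq.PosDef)
    (hσtr : ((σq ^ 4)⁻¹).trace = 1) :
    traceNorm
        ((∑ x, Matrix.single x x (1 : ℂ) ⊗ₖ ((P x : ℂ) • ρB x))
          - (Fintype.card X : ℂ)⁻¹ •
              ((1 : Matrix X X ℂ) ⊗ₖ (∑ x, (P x : ℂ) • ρB x)))
      ≤ Real.sqrt (Fintype.card X) *
        Real.sqrt
          (((((1 : Matrix X X ℂ) ⊗ₖ σq) *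
              ((∑ x, Matrix.single x x (1 : ℂ) ⊗ₖ ((P x : ℂ) • ρB x))
                - (Fintype.card X : ℂ)⁻¹ •
                    ((1 : Matrix X X ℂ) ⊗ₖ (∑ x, (P x : ℂ) • ρB x))) *
              ((1 : Matrix X X ℂ) ⊗ₖ σq)) ^ 2).trace.re) :=
  l1_le_sqrt_dim_mul_sqrt_l2_general P ρB hρ σq hσ hσtr
end

section
/- Let ρ_{XB} = Σ_x P_X(x)|x⟩⟨x| ⊗ ρ_B^x be classical on H_X with X ∈ 𝒳 and normalized conditional operators ρ_B^x. Then for any invertible σ_B: d_2(ρ_{XB}|σ_B) = Σ_x tr((σ_B^{-1/4} P_X(x) ρ_B^x σ_B^{-1/4})^2) - (1/|𝒳|) tr((σ_B^{-1/4} ρ_B σ_B^{-1/4})^2). -/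
open Matrix BigOperators Finset
open scoped Kronecker ComplexOrder

/-!
Conjugating by `1 ⊗ σ` and taking linear combinations both preserve the classical–quantum
form `∑ₓ |x⟩⟨x| ⊗ Aₓ`, and such operators multiply blockwise. With `Aₓ = σ P(x) ρₓ σ` and
`S = ∑ₓ Aₓ`, the operator to be squared is therefore the cq-operator with blocks
`Aₓ - S / |X|`, and the claim becomes the variance identity
`∑ₓ tr (Aₓ - S / |X|)² = ∑ₓ tr Aₓ² - tr S² / |X|`.
-/

namespace Matrix

variable {ι l m n p X R : Type*}

theorem sum_kronecker [CommSemiring R] [Fintype ι] (A : ι → Matrix l m R) (B : Matrix n p R) :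
    (∑ i, A i) ⊗ₖ B = ∑ i, A i ⊗ₖ B := by
  ext ⟨i, k⟩ ⟨j, l⟩
  simp only [kronecker_apply, Matrix.sum_apply, Finset.sum_mul]

variable [Fintype X]

theorem sum_trace_sq_sub_inv_card_smul_sum [Field R] [Fintype n] [DecidableEq n]
    (A : X → Matrix n n R) :
    ∑ x, ((A x - (Fintype.card X : R)⁻¹ • ∑ y, A y) ^ 2).trace
      = ∑ x, (A x ^ 2).trace - (Fintype.card X : R)⁻¹ * ((∑ y, A y) ^ 2).trace := by
  set c := (Fintype.card X : R)⁻¹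
  set S := ∑ y, A y
  have hexpand : ∀ x, ((A x - c • S) ^ 2).trace
      = (A x ^ 2).trace - 2 * c * (A x * S).trace + c * c * (S ^ 2).trace := by
    intro x
    simp only [sq, sub_mul, mul_sub, smul_mul_assoc, mul_smul_comm, trace_sub, trace_smul,
      smul_eq_mul, trace_mul_comm S (A x)]
    ring
  have hcross : ∑ x, (A x * S).trace = (S ^ 2).trace := by
    rw [← trace_sum, ← Finset.sum_mul, sq]
  -- `c * c * |X| = c` holds also for empty `X`, where `c = 0⁻¹ = 0`.
  have hcard : c * c * (Fintype.card X : R) = c := by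
    simpa only [c, inv_inv] using mul_self_mul_inv c
  rw [Finset.sum_congr rfl fun x _ => hexpand x]
  simp only [Finset.sum_add_distrib, Finset.sum_sub_distrib, ← Finset.mul_sum, hcross,
    Finset.sum_const, Finset.card_univ, nsmul_eq_mul]
  linear_combination (S ^ 2).trace * hcard

variable [DecidableEq X]

/-- The classical–quantum operator `∑ₓ |x⟩⟨x| ⊗ Aₓ`. -/
def cqOperator [CommSemiring R] (A : X → Matrix n n R) : Matrix (X × n) (X × n) R :=
  ∑ x, single x x 1 ⊗ₖ A x

section CommSemiring

variable [CommSemiring R]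

theorem one_kronecker_eq_cqOperator (B : Matrix n n R) :
    (1 : Matrix X X R) ⊗ₖ B = cqOperator fun _ => B := by
  rw [← sum_single_one, sum_kronecker, cqOperator]

theorem cqOperator_smul (c : R) (A : X → Matrix n n R) :
    cqOperator (c • A) = c • cqOperator A := by
  simp only [cqOperator, Finset.smul_sum, Pi.smul_apply, kronecker_smul]

variable [Fintype n]

theorem one_kronecker_mul_cqOperator_mul (M N : Matrix n n R) (A : X → Matrix n n R) :
    ((1 : Matrix X X R) ⊗ₖ M) * cqOperator A * ((1 : Matrix X X R) ⊗ₖ N)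
      = cqOperator fun x => M * A x * N := by
  simp only [cqOperator, Finset.mul_sum, Finset.sum_mul, ← mul_kronecker_mul, one_mul, mul_one]

theorem cqOperator_mul_cqOperator (A B : X → Matrix n n R) :
    cqOperator A * cqOperator B = cqOperator (A * B) := by
  simp only [cqOperator, Finset.sum_mul_sum, ← mul_kronecker_mul]
  refine Finset.sum_congr rfl fun x _ => ?_
  rw [Finset.sum_eq_single x, single_mul_single_same, one_mul, Pi.mul_apply]
  · intro y _ hyx
    rw [single_mul_single_of_ne (h := hyx.symm), zero_kronecker]
  · simp

theorem trace_cqOperator (A : X → Matrix n n R) :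
    (cqOperator A).trace = ∑ x, (A x).trace := by
  simp only [cqOperator, trace_sum, trace_kronecker, trace_single_eq_same, one_mul]

end CommSemiring

theorem cqOperator_sub [CommRing R] (A B : X → Matrix n n R) :
    cqOperator (A - B) = cqOperator A - cqOperator B := by
  ext ⟨i, k⟩ ⟨j, l⟩
  simp only [cqOperator, kronecker_apply, Matrix.sum_apply, Pi.sub_apply, sub_apply, mul_sub,
    Finset.sum_sub_distrib]

end Matrix

/-- `σq` stands for `σ_B^{-1/4}`. -/
theorem l2_dist_explicit_general {X : Type*} [Fintype X] [DecidableEq X] {d : ℕ}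
    (P : X → ℝ)
    (ρB : X → Matrix (Fin d) (Fin d) ℂ)
    (σq : Matrix (Fin d) (Fin d) ℂ) :
    ((((1 : Matrix X X ℂ) ⊗ₖ σq) *
        ((∑ x, Matrix.single x x (1 : ℂ) ⊗ₖ ((P x : ℂ) • ρB x))
          - (Fintype.card X : ℂ)⁻¹ •
              ((1 : Matrix X X ℂ) ⊗ₖ (∑ x, (P x : ℂ) • ρB x))) *
        ((1 : Matrix X X ℂ) ⊗ₖ σq)) ^ 2).trace
      = (∑ x, ((σq * ((P x : ℂ) • ρB x) * σq) ^ 2).trace)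
        - (Fintype.card X : ℂ)⁻¹ * ((σq * (∑ x, (P x : ℂ) • ρB x) * σq) ^ 2).trace := by
  set A : X → Matrix (Fin d) (Fin d) ℂ := fun x => σq * ((P x : ℂ) • ρB x) * σq
  have hS : σq * (∑ x, (P x : ℂ) • ρB x) * σq = ∑ x, A x := by
    simp only [A, Finset.mul_sum, Finset.sum_mul]
  have hconj : ((1 : Matrix X X ℂ) ⊗ₖ σq) *
      (cqOperator (fun x => (P x : ℂ) • ρB x)
        - (Fintype.card X : ℂ)⁻¹ • ((1 : Matrix X X ℂ) ⊗ₖ ∑ x, (P x : ℂ) • ρB x))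
        * ((1 : Matrix X X ℂ) ⊗ₖ σq)
      = cqOperator fun x => A x - (Fintype.card X : ℂ)⁻¹ • ∑ y, A y := by
    rw [one_kronecker_eq_cqOperator (∑ x, (P x : ℂ) • ρB x), ← cqOperator_smul,
      ← cqOperator_sub, one_kronecker_mul_cqOperator_mul, ← hS]
    simp only [Pi.sub_apply, Pi.smul_apply, mul_sub, sub_mul, mul_smul_comm, smul_mul_assoc, A]
  calc _ = ((cqOperator fun x => A x - (Fintype.card X : ℂ)⁻¹ • ∑ y, A y) ^ 2).trace :=
        congrArg (fun M => (M ^ 2).trace) hconj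
    _ = _ := by
      rw [sq, cqOperator_mul_cqOperator, trace_cqOperator, hS,
        ← sum_trace_sq_sub_inv_card_smul_sum A]
      simp only [Pi.mul_apply, sq]

/-- Explicit formula for the conditional L₂-distance from uniform:
`d₂(ρ_XB|σ_B) = Σ_x tr((σ_B^{-1/4} P_X(x) ρ_B^x σ_B^{-1/4})²) - (1/|X|) tr((σ_B^{-1/4} ρ_B σ_B^{-1/4})²)`,
where `σq = σ_B^{-1/4}` (any invertible `σ_B`, i.e. `σq` positive definite). -/
theorem l2_dist_explicit {X : Type*} [Fintype X] [DecidableEq X] {d : ℕ}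
    (P : X → ℝ) (hP0 : ∀ x, 0 ≤ P x) (hP1 : ∑ x, P x = 1)
    (ρB : X → Matrix (Fin d) (Fin d) ℂ)
    (hρ : ∀ x, (ρB x).PosSemidef) (hρtr : ∀ x, (ρB x).trace = 1)
    (σq : Matrix (Fin d) (Fin d) ℂ) (hσ : σq.PosDef) :
    ((((1 : Matrix X X ℂ) ⊗ₖ σq) *
        ((∑ x, Matrix.single x x (1 : ℂ) ⊗ₖ ((P x : ℂ) • ρB x))
          - (Fintype.card X : ℂ)⁻¹ •
              ((1 : Matrix X X ℂ) ⊗ₖ (∑ x, (P x : ℂ) • ρB x))) *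
        ((1 : Matrix X X ℂ) ⊗ₖ σq)) ^ 2).trace
      = (∑ x, ((σq * ((P x : ℂ) • ρB x) * σq) ^ 2).trace)
        - (Fintype.card X : ℂ)⁻¹ * ((σq * (∑ x, (P x : ℂ) • ρB x) * σq) ^ 2).trace :=
  l2_dist_explicit_general P ρB σq
end

section
/- Let ρ_{XB} be classical on H_X with X ∈ {0,1}^n, {A_i} a δ-biased family over {0,1}^n, I uniform and independent, D_i = A_i ⊕ X. Then for any normalized invertible σ_B: E_{i←I}[d_2(ρ_{D_i B}|σ_B)] ≤ δ^2 · 2^{-H_2(ρ_{XB}|σ_B)}. -/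
/-!
Write `f_i = P_{A_i} - 2⁻ⁿ` and `σ = σ_B^{-1/4}`. Block by block, `σ (ρ_{D_i B} - ρ_U ⊗ ρ_B) σ`
is the convolution over `ℤ₂ⁿ` of `f_i` with `g x = P_X(x) σ ρ_B^x σ`, so Plancherel and the
convolution theorem turn its squared Hilbert–Schmidt norm into `∑_α bias_α(f_i)² tr((ĝ α)²)`.
The `α = 0` coefficient vanishes because `f_i` has mean zero, averaging over `i` bounds every other
one by `δ²`, and Plancherel once more gives
`∑_α tr((ĝ α)²) = ∑_x P_X(x)² tr((σ ρ_B^x σ)²) = 2^{-H₂(ρ_{XB}|σ_B)}`.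
-/

open Matrix BigOperators Finset
open scoped Kronecker ComplexOrder

/-- Bias of a distribution `P` on bit strings with respect to `α`. -/
noncomputable def bias {n : ℕ} (α : BS n) (P : BS n → ℝ) : ℝ := ∑ a, P a * sgn α a

section Characters

variable {n : ℕ}

lemma sgn_comm (α x : BS n) : sgn α x = sgn x α := by
  simp only [sgn, mul_comm]

lemma sgn_zero_left (x : BS n) : sgn 0 x = 1 := by
  simp [sgn]

lemma sgn_zero_right (α : BS n) : sgn α 0 = 1 := by
  simp [sgn]

lemma sgn_add_right (α x y : BS n) : sgn α (x + y) = sgn α x * sgn α y := by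
  have key : ∀ a b : ZMod 2, (a + b = 0 ↔ (a = 0 ↔ b = 0)) := by decide
  simp only [sgn, Pi.add_apply, mul_add, Finset.sum_add_distrib, key]
  split_ifs <;> simp_all

lemma sgn_add_left (α β x : BS n) : sgn (α + β) x = sgn α x * sgn β x := by
  rw [sgn_comm, sgn_add_right, sgn_comm x, sgn_comm x]

lemma sum_sgn_left (z : BS n) : ∑ α, sgn α z = if z = 0 then 2 ^ n else 0 := by
  split_ifs with hz
  · simp [hz, sgn_zero_right, ZMod.card]
  obtain ⟨j, hj⟩ : ∃ j, z j ≠ 0 := by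
    by_contra! h
    exact hz (funext h)
  -- translating by the `j`-th unit vector flips the sign of every term
  have hflip : sgn (Pi.single j 1) z = -1 := by
    simp [sgn, Pi.single_apply, hj]
  have hsum := Equiv.sum_comp (Equiv.addRight (Pi.single j 1 : BS n)) (fun α => sgn α z)
  simp only [Equiv.coe_addRight, sgn_add_left, hflip, mul_neg, mul_one,
    Finset.sum_neg_distrib] at hsum
  linarith

lemma sum_sgn_right (α : BS n) : ∑ x, sgn α x = if α = 0 then 2 ^ n else 0 := by
  simp only [sgn_comm α, sum_sgn_left]

lemma sum_sgn_mul_sgn (x y : BS n) :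
    ∑ α, sgn α x * sgn α y = if x = y then 2 ^ n else 0 := by
  simp only [← sgn_add_right, sum_sgn_left, ← ZModModule.sub_eq_add, sub_eq_zero]

lemma sum_sgn_mul_add (f : BS n → ℝ) (α x : BS n) :
    ∑ y, sgn α y * f (y + x) = sgn α x * bias α f := by
  rw [← Equiv.sum_comp (Equiv.addRight x), bias, Finset.mul_sum]
  refine Finset.sum_congr rfl fun a _ => ?_
  simp only [Equiv.coe_addRight, add_assoc, ZModModule.add_self, add_zero, sgn_add_right]
  ring

lemma bias_sub_inv_two_pow (P : BS n → ℝ) (hP : ∑ a, P a = 1) (α : BS n) :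
    bias α (fun a => P a - ((2 : ℝ) ^ n)⁻¹) = if α = 0 then 0 else bias α P := by
  simp only [bias, sub_mul, Finset.sum_sub_distrib, ← Finset.mul_sum, sum_sgn_right]
  split_ifs with hα
  · simp [hα, sgn_zero_left, hP]
  · simp

end Characters

section Fourier

variable {n d : ℕ}

lemma sum_Ftrans_mul_self (M : BS n → Matrix (Fin d) (Fin d) ℂ) :
    ∑ α, Ftrans M α * Ftrans M α = ∑ x, M x * M x := by
  set c : ℂ := ((Real.sqrt (2 ^ n) : ℂ))⁻¹
  have hc : c * c * 2 ^ n = 1 := by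
    rw [← mul_inv, ← Complex.ofReal_mul, Real.mul_self_sqrt (by positivity)]
    push_cast
    exact inv_mul_cancel₀ (by positivity)
  calc ∑ α, Ftrans M α * Ftrans M α
      = (c * c) • ∑ x, ∑ y, ((∑ α, sgn α x * sgn α y : ℝ) : ℂ) • (M x * M y) := by
        simp only [Ftrans, smul_mul_smul_comm, Finset.sum_mul_sum, ← Finset.smul_sum,
          Complex.ofReal_sum, Finset.sum_smul]
        rw [Finset.sum_comm]
        refine congrArg _ (Finset.sum_congr rfl fun x _ => ?_)
        rw [Finset.sum_comm]
        push_cast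
        rfl
    _ = ∑ x, M x * M x := by
        simp only [sum_sgn_mul_sgn, apply_ite, Complex.ofReal_zero, Finset.smul_sum, smul_smul]
        push_cast
        simp [hc]

lemma isHermitian_Ftrans {M : BS n → Matrix (Fin d) (Fin d) ℂ}
    (hM : ∀ x, (M x).IsHermitian) (α : BS n) : (Ftrans M α).IsHermitian := by
  simp [Ftrans, IsHermitian, conjTranspose_sum, (hM _).eq]

/-- `y + x = y - x` on `BS n`, so this is the convolution `f ∗ g`. -/
noncomputable def bsConv (f : BS n → ℝ) (g : BS n → Matrix (Fin d) (Fin d) ℂ) (y : BS n) :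
    Matrix (Fin d) (Fin d) ℂ :=
  ∑ x, (f (y + x) : ℂ) • g x

lemma Ftrans_bsConv (f : BS n → ℝ) (g : BS n → Matrix (Fin d) (Fin d) ℂ) (α : BS n) :
    Ftrans (bsConv f g) α = (bias α f : ℂ) • Ftrans g α := by
  simp only [Ftrans, bsConv, Finset.smul_sum, smul_smul]
  rw [Finset.sum_comm]
  refine Finset.sum_congr rfl fun y _ => ?_
  have hcoeff : ∑ x, (sgn α x : ℂ) * (f (x + y) : ℂ) = (sgn α y * bias α f : ℝ) := by
    rw [← sum_sgn_mul_add]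
    push_cast
    rfl
  rw [← Finset.sum_smul, ← Finset.mul_sum, hcoeff]
  push_cast
  congr 1
  ring

lemma sum_trace_bsConv_sq (f : BS n → ℝ) (g : BS n → Matrix (Fin d) (Fin d) ℂ) :
    ∑ y, ((bsConv f g y) ^ 2).trace = ∑ α, (bias α f : ℂ) ^ 2 * ((Ftrans g α) ^ 2).trace := by
  simp only [sq, ← Matrix.trace_sum]
  rw [← sum_Ftrans_mul_self]
  simp only [Ftrans_bsConv, smul_mul_smul_comm, Matrix.trace_sum, Matrix.trace_smul, smul_eq_mul]

end Fourier

lemma trace_reindex_self {m o R : Type*} [Fintype m] [Fintype o] [AddCommMonoid R] (e : m ≃ o)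
    (M : Matrix m m R) : (reindex e e M).trace = M.trace :=
  e.symm.sum_comp fun i => M i i

section BlockDiagonal

variable {o m R : Type*} [Fintype o] [DecidableEq o]

lemma sum_single_kronecker [Semiring R] (A : o → Matrix m m R) :
    ∑ k, single k k (1 : R) ⊗ₖ A k =
      reindex (Equiv.prodComm m o) (Equiv.prodComm m o) (blockDiagonal A) := by
  ext ⟨a, i⟩ ⟨b, j⟩
  rcases eq_or_ne a b with rfl | hab
  · simp [Matrix.sum_apply, blockDiagonal_apply, single_apply]
  · simp [Matrix.sum_apply, blockDiagonal_apply, single_apply, hab]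
    exact Finset.sum_eq_zero fun k _ => if_neg fun hk => hab (hk.1.symm.trans hk.2)

lemma trace_conj_sum_single_kronecker_sq [Fintype m] [DecidableEq m] [CommRing R]
    (σ Y : Matrix m m R) (X : o → Matrix m m R) (c : R) :
    ((((1 : Matrix o o R) ⊗ₖ σ) * (∑ k, single k k (1 : R) ⊗ₖ X k - c • (1 ⊗ₖ Y)) *
        (1 ⊗ₖ σ)) ^ 2).trace = ∑ k, ((σ * (X k - c • Y) * σ) ^ 2).trace := by
  have hblock : ((1 : Matrix o o R) ⊗ₖ σ) * (∑ k, single k k (1 : R) ⊗ₖ X k - c • (1 ⊗ₖ Y)) *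
      (1 ⊗ₖ σ) = reindexAlgEquiv R R (Equiv.prodComm m o)
        (blockDiagonal fun k => σ * (X k - c • Y) * σ) := by
    rw [blockDiagonal_mul, blockDiagonal_mul,
      show (fun k => X k - c • Y) = X - c • fun _ => Y from rfl, blockDiagonal_sub,
      blockDiagonal_smul, map_mul, map_mul, map_sub, map_smul, coe_reindexAlgEquiv,
      one_kronecker, one_kronecker, sum_single_kronecker]
  rw [hblock, ← map_pow, coe_reindexAlgEquiv, trace_reindex_self, ← blockDiagonal_pow,
    trace_blockDiagonal]
  rfl

end BlockDiagonal

section Distance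

variable {n d : ℕ}

/-- The `y`-th diagonal block of `σ (ρ_{D B} - ρ_U ⊗ ρ_B) σ`. -/
lemma conj_sub_eq_bsConv (PX P : BS n → ℝ) (ρ : BS n → Matrix (Fin d) (Fin d) ℂ)
    (σ : Matrix (Fin d) (Fin d) ℂ) (y : BS n) :
    σ * (∑ x, ((PX x * P (y + x) : ℝ) : ℂ) • ρ x - ((2 : ℂ) ^ n)⁻¹ • ∑ x, (PX x : ℂ) • ρ x) * σ
      = bsConv (fun a => P a - ((2 : ℝ) ^ n)⁻¹) (fun x => (PX x : ℂ) • (σ * ρ x * σ)) y := by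
  simp only [bsConv, Finset.smul_sum, ← Finset.sum_sub_distrib, Matrix.mul_sum, Matrix.sum_mul]
  refine Finset.sum_congr rfl fun x _ => ?_
  simp only [smul_smul, ← sub_smul, Matrix.mul_smul, Matrix.smul_mul]
  congr 1
  push_cast
  ring

lemma re_trace_conj_sub_sq_eq_sum_bias_sq (PX P : BS n → ℝ)
    (ρ : BS n → Matrix (Fin d) (Fin d) ℂ) (σ : Matrix (Fin d) (Fin d) ℂ) :
    ((((1 : Matrix (BS n) (BS n) ℂ) ⊗ₖ σ) *
        ((∑ y : BS n, single y y (1 : ℂ) ⊗ₖ (∑ x, ((PX x * P (y + x) : ℝ) : ℂ) • ρ x))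
          - ((2 : ℂ) ^ n)⁻¹ • ((1 : Matrix (BS n) (BS n) ℂ) ⊗ₖ (∑ x, (PX x : ℂ) • ρ x))) *
        ((1 : Matrix (BS n) (BS n) ℂ) ⊗ₖ σ)) ^ 2).trace.re
      = ∑ α, bias α (fun a => P a - ((2 : ℝ) ^ n)⁻¹) ^ 2 *
          ((Ftrans (fun x => (PX x : ℂ) • (σ * ρ x * σ)) α) ^ 2).trace.re := by
  rw [trace_conj_sum_single_kronecker_sq]
  simp_rw [conj_sub_eq_bsConv]
  rw [sum_trace_bsConv_sq, Complex.re_sum]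
  simp only [← Complex.ofReal_pow, Complex.re_ofReal_mul]

end Distance

lemma re_trace_sq_nonneg {m : Type*} [Fintype m] [DecidableEq m] {H : Matrix m m ℂ}
    (hH : H.IsHermitian) : 0 ≤ (H ^ 2).trace.re := by
  have h := (posSemidef_conjTranspose_mul_self H).trace_nonneg
  rw [hH.eq, ← sq] at h
  exact (Complex.nonneg_iff.1 h).1

lemma le_rpow_logb_self {b : ℝ} (hb : 0 < b) (hb1 : b ≠ 1) (x : ℝ) : x ≤ b ^ Real.logb b x := by
  rcases eq_or_ne x 0 with rfl | hx
  · simp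
  · rw [Real.rpow_logb_eq_abs hb hb1 hx]
    exact le_abs_self x

theorem expected_l2_dist_le_general {n d : ℕ} {ι : Type*} [Fintype ι]
    (PX : BS n → ℝ)
    (ρB : BS n → Matrix (Fin d) (Fin d) ℂ)
    (hρ : ∀ x, (ρB x).PosSemidef)
    (PA : ι → BS n → ℝ) (hPA1 : ∀ i, ∑ a, PA i a = 1)
    (δ : ℝ)
    (hbias : ∀ α : BS n, α ≠ 0 →
      Real.sqrt ((Fintype.card ι : ℝ)⁻¹ * ∑ i, (bias α (PA i)) ^ 2) ≤ δ)
    (σq : Matrix (Fin d) (Fin d) ℂ) (hσ : σq.PosDef) :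
    (Fintype.card ι : ℝ)⁻¹ *
        ∑ i, ((((1 : Matrix (BS n) (BS n) ℂ) ⊗ₖ σq) *
            ((∑ dd : BS n, Matrix.single dd dd (1 : ℂ) ⊗ₖ
                (∑ x, ((PX x * PA i (dd + x) : ℝ) : ℂ) • ρB x))
              - ((2 : ℂ) ^ n)⁻¹ •
                  ((1 : Matrix (BS n) (BS n) ℂ) ⊗ₖ (∑ x, (PX x : ℂ) • ρB x))) *
            ((1 : Matrix (BS n) (BS n) ℂ) ⊗ₖ σq)) ^ 2).trace.re
      ≤ δ ^ 2 * (2 : ℝ) ^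
          (-(- Real.logb 2 (∑ x, (PX x) ^ 2 * ((σq * ρB x * σq) ^ 2).trace.re))) := by
  set g : BS n → Matrix (Fin d) (Fin d) ℂ := fun x => (PX x : ℂ) • (σq * ρB x * σq)
  set b : ι → BS n → ℝ := fun i α => bias α (fun a => PA i a - ((2 : ℝ) ^ n)⁻¹)
  have hQ (α : BS n) : 0 ≤ ((Ftrans g α) ^ 2).trace.re :=
    re_trace_sq_nonneg <| isHermitian_Ftrans (fun x => by
      simp [g, IsHermitian, conjTranspose_mul, hσ.1.eq, (hρ x).1.eq, Matrix.mul_assoc]) α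
  have hb (α : BS n) : (Fintype.card ι : ℝ)⁻¹ * ∑ i, b i α ^ 2 ≤ δ ^ 2 := by
    simp only [b, bias_sub_inv_two_pow _ (hPA1 _)]
    split_ifs with hα
    · simp [sq_nonneg]
    · exact (Real.sqrt_le_iff.1 (hbias α hα)).2
  have hplancherel : ∑ α, ((Ftrans g α) ^ 2).trace.re
      = ∑ x, PX x ^ 2 * ((σq * ρB x * σq) ^ 2).trace.re := by
    simp only [← Complex.re_sum, ← Matrix.trace_sum, sq, sum_Ftrans_mul_self, g]
    simp only [smul_mul_smul_comm, Matrix.trace_sum, Matrix.trace_smul, smul_eq_mul,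
      ← Complex.ofReal_mul, Complex.re_sum, Complex.re_ofReal_mul]
  simp only [re_trace_conj_sub_sq_eq_sum_bias_sq]
  calc _ = ∑ α, ((Fintype.card ι : ℝ)⁻¹ * ∑ i, b i α ^ 2) * ((Ftrans g α) ^ 2).trace.re := by
        simp only [Finset.mul_sum, Finset.sum_mul]
        rw [Finset.sum_comm]
        exact Finset.sum_congr rfl fun _ _ => Finset.sum_congr rfl fun _ _ => (mul_assoc _ _ _).symm
    _ ≤ ∑ α, δ ^ 2 * ((Ftrans g α) ^ 2).trace.re :=
        Finset.sum_le_sum fun α _ => mul_le_mul_of_nonneg_right (hb α) (hQ α)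
    _ = δ ^ 2 * ∑ x, PX x ^ 2 * ((σq * ρB x * σq) ^ 2).trace.re := by
        rw [← Finset.mul_sum, hplancherel]
    _ ≤ _ := by
        rw [neg_neg]
        exact mul_le_mul_of_nonneg_left (le_rpow_logb_self two_pos (by norm_num) _) (sq_nonneg δ)

/-- Expected conditional L₂-distance bound: for a `δ`-biased family `{A_i}` and
`D_i = A_i ⊕ X`, `E_i[d₂(ρ_{D_i B}|σ_B)] ≤ δ² · 2^{-H₂(ρ_XB|σ_B)}`. -/
theorem expected_l2_dist_le {n d : ℕ} {ι : Type*} [Fintype ι] [Nonempty ι]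
    (PX : BS n → ℝ) (hPX0 : ∀ x, 0 ≤ PX x) (hPX1 : ∑ x, PX x = 1)
    (ρB : BS n → Matrix (Fin d) (Fin d) ℂ)
    (hρ : ∀ x, (ρB x).PosSemidef) (hρtr : ∀ x, (ρB x).trace = 1)
    (PA : ι → BS n → ℝ) (hPA0 : ∀ i a, 0 ≤ PA i a) (hPA1 : ∀ i, ∑ a, PA i a = 1)
    (δ : ℝ)
    (hbias : ∀ α : BS n, α ≠ 0 →
      Real.sqrt ((Fintype.card ι : ℝ)⁻¹ * ∑ i, (bias α (PA i)) ^ 2) ≤ δ)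
    (σq : Matrix (Fin d) (Fin d) ℂ) (hσ : σq.PosDef)
    (hσtr : ((σq ^ 4)⁻¹).trace = 1) :
    (Fintype.card ι : ℝ)⁻¹ *
        ∑ i, ((((1 : Matrix (BS n) (BS n) ℂ) ⊗ₖ σq) *
            ((∑ dd : BS n, Matrix.single dd dd (1 : ℂ) ⊗ₖ
                (∑ x, ((PX x * PA i (dd + x) : ℝ) : ℂ) • ρB x))
              - ((2 : ℂ) ^ n)⁻¹ •
                  ((1 : Matrix (BS n) (BS n) ℂ) ⊗ₖ (∑ x, (PX x : ℂ) • ρB x))) *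
            ((1 : Matrix (BS n) (BS n) ℂ) ⊗ₖ σq)) ^ 2).trace.re
      ≤ δ ^ 2 * (2 : ℝ) ^
          (-(- Real.logb 2 (∑ x, (PX x) ^ 2 * ((σq * ρB x * σq) ^ 2).trace.re))) :=
  expected_l2_dist_le_general PX ρB hρ PA hPA1 δ hbias σq hσ
end

section
/- For ρ_{XB} classical on H_X with X ∈ 𝒳, the conditional min-entropy satisfies H_∞(X) - log dim(H_B) ≤ H_∞(ρ_{XB}|B), where H_∞(X) = -log max_x P_X(x) is the classical min-entropy of the marginal. -/
open Matrix BigOperators Finset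
open scoped Kronecker ComplexOrder

/-- Largest (real) eigenvalue of a matrix: the supremum of real `t` such that `t` is an
eigenvalue of the associated linear endomorphism. -/
noncomputable def lamMax {m : Type*} [Fintype m] [DecidableEq m] (A : Matrix m m ℂ) : ℝ :=
  sSup {t : ℝ | Module.End.HasEigenvalue (Matrix.toLin' A) (t : ℂ)}

/-!
The maximally mixed state `σ_B = 1/d` (i.e. `σq = d^{1/4}`) turns each candidate matrix into
`P_X(x) d ρ_B^x`, whose largest eigenvalue is at most its trace `P_X(x) d`; this gives the bound.
The supremum is finite: a normalized `σ_B` satisfies `σ_B ≤ 1`, hence `σ_B⁻¹ ≥ 1`, so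
`tr (σ_B^{-1/2} ρ_B^x σ_B^{-1/2}) ≥ 1` and every candidate has `λ_max ≥ P_X(x)/d`.
-/

namespace Matrix

open scoped MatrixOrder

section Order

variable {𝕜 n : Type*} [RCLike 𝕜] [Fintype n] [DecidableEq n]

lemma trace_mul_nonneg {A B : Matrix n n 𝕜} (hA : 0 ≤ A) (hB : 0 ≤ B) : 0 ≤ (A * B).trace := by
  obtain ⟨C, rfl⟩ := CStarAlgebra.nonneg_iff_eq_star_mul_self.mp hA
  rw [mul_assoc, trace_mul_comm]
  exact (nonneg_iff_posSemidef.mp (star_right_conjugate_nonneg hB C)).trace_nonneg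

lemma trace_le_trace_mul_of_one_le {A T : Matrix n n 𝕜} (hA : 0 ≤ A) (hT : 1 ≤ T) :
    A.trace ≤ (A * T).trace := by
  have := trace_mul_nonneg hA (sub_nonneg.mpr hT)
  rwa [mul_sub, mul_one, trace_sub, sub_nonneg] at this

lemma PosSemidef.le_one_of_trace_eq_one {N : Matrix n n 𝕜} (hN : N.PosSemidef)
    (htr : N.trace = 1) : N ≤ 1 := by
  refine CFC.le_one (R := ℝ) (fun t ht => ?_) hN.1.isSelfAdjoint
  obtain ⟨i, rfl⟩ := hN.1.spectrum_real_eq_range_eigenvalues ▸ ht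
  have hsum : ∑ j, hN.1.eigenvalues j = 1 := by
    simpa [htr] using (congrArg RCLike.re hN.1.trace_eq_sum_eigenvalues).symm
  exact hsum ▸ single_le_sum (fun j _ => hN.eigenvalues_nonneg j) (mem_univ i)

open scoped Matrix.Norms.L2Operator in
lemma PosDef.one_le_inv_of_trace_eq_one {N : Matrix n n ℂ} (hN : N.PosDef)
    (htr : N.trace = 1) : 1 ≤ N⁻¹ := by
  have hle := hN.posSemidef.le_one_of_trace_eq_one htr
  lift N to (Matrix n n ℂ)ˣ using hN.isUnit
  rw [← coe_units_inv]
  exact (CStarAlgebra.one_le_inv_iff_le_one hN.posSemidef.nonneg).mpr hle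

end Order

variable {n : Type*} [Fintype n] [DecidableEq n] {A : Matrix n n ℂ}

lemma IsHermitian.lamMax_eq_sSup_range_eigenvalues (hA : A.IsHermitian) :
    lamMax A = sSup (Set.range hA.eigenvalues) := by
  have hspec : spectrum ℂ (toLin' A) = spectrum ℂ A := AlgEquiv.spectrum_eq toLinAlgEquiv' A
  unfold lamMax
  congr 1
  ext t
  rw [Set.mem_ofPred_eq, Module.End.hasEigenvalue_iff_mem_spectrum, hspec,
    show (t : ℂ) = algebraMap ℝ ℂ t from rfl, spectrum.algebraMap_mem_iff,
    hA.spectrum_real_eq_range_eigenvalues]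

lemma IsHermitian.eigenvalues_le_lamMax (hA : A.IsHermitian) (i : n) :
    hA.eigenvalues i ≤ lamMax A :=
  hA.lamMax_eq_sSup_range_eigenvalues ▸ le_csSup (Set.finite_range _).bddAbove ⟨i, rfl⟩

lemma IsHermitian.lamMax_le [Nonempty n] (hA : A.IsHermitian) {c : ℝ}
    (h : ∀ i, hA.eigenvalues i ≤ c) : lamMax A ≤ c :=
  hA.lamMax_eq_sSup_range_eigenvalues ▸
    csSup_le (Set.range_nonempty _) (Set.forall_mem_range.mpr h)

lemma IsHermitian.trace_re_eq_sum_eigenvalues (hA : A.IsHermitian) :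
    A.trace.re = ∑ i, hA.eigenvalues i := by
  simpa using congrArg Complex.re hA.trace_eq_sum_eigenvalues

lemma IsHermitian.trace_re_le_card_mul_lamMax (hA : A.IsHermitian) :
    A.trace.re ≤ Fintype.card n * lamMax A := by
  rw [hA.trace_re_eq_sum_eigenvalues, ← nsmul_eq_mul, ← card_univ, ← sum_const]
  exact sum_le_sum fun i _ => hA.eigenvalues_le_lamMax i

lemma PosSemidef.lamMax_le_trace_re [Nonempty n] (hA : A.PosSemidef) : lamMax A ≤ A.trace.re :=
  hA.1.lamMax_le fun i => hA.1.trace_re_eq_sum_eigenvalues ▸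
    single_le_sum (fun j _ => hA.eigenvalues_nonneg j) (mem_univ i)

end Matrix

section MinEntropy

variable {n : Type*} [Fintype n] [DecidableEq n]

lemma lamMax_smul_le [Nonempty n] {p : ℝ} (hp : 0 ≤ p) {ρ : Matrix n n ℂ} (hρ : ρ.PosSemidef)
    (hρtr : ρ.trace = 1) : lamMax ((p : ℂ) • ρ) ≤ p := by
  simpa [trace_smul, hρtr] using (hρ.smul hp).lamMax_le_trace_re

open scoped MatrixOrder in
lemma div_card_le_lamMax_smul_conj [Nonempty n] {p : ℝ} (hp : 0 ≤ p) {ρ σ : Matrix n n ℂ}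
    (hρ : ρ.PosSemidef) (hρtr : ρ.trace = 1) (hσ : σ.PosDef) (hσtr : ((σ ^ 4)⁻¹).trace = 1) :
    p / Fintype.card n ≤ lamMax ((p : ℂ) • (σ ^ 2 * ρ * σ ^ 2)) := by
  have hσ4 : (σ ^ 4).PosDef := hσ.posSemidef.pow 4 |>.posDef_iff_isUnit.mpr (hσ.isUnit.pow 4)
  have hone_le : 1 ≤ σ ^ 4 := by
    simpa [nonsing_inv_nonsing_inv _ ((isUnit_iff_isUnit_det _).mp hσ4.isUnit)] using
      hσ4.inv.one_le_inv_of_trace_eq_one hσtr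
  have htrace : (σ ^ 2 * ρ * σ ^ 2).trace = (ρ * σ ^ 4).trace := by
    rw [trace_mul_cycle, ← pow_add, trace_mul_comm]
  have hone_le_trace : 1 ≤ (σ ^ 2 * ρ * σ ^ 2).trace.re := by
    simpa [htrace, hρtr] using Complex.re_le_re (trace_le_trace_mul_of_one_le hρ.nonneg hone_le)
  have hconj : (σ ^ 2 * ρ * σ ^ 2).PosSemidef := by
    have := hρ.conjTranspose_mul_mul_same (σ ^ 2)
    rwa [(hσ.1.pow 2).eq] at this
  have hcard : (0 : ℝ) < Fintype.card n := by exact_mod_cast Fintype.card_pos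
  rw [div_le_iff₀' hcard]
  calc p ≤ p * (σ ^ 2 * ρ * σ ^ 2).trace.re := le_mul_of_one_le_right hp hone_le_trace
    _ = ((p : ℂ) • (σ ^ 2 * ρ * σ ^ 2)).trace.re := by simp [trace_smul]
    _ ≤ _ := (hconj.smul hp).1.trace_re_le_card_mul_lamMax

lemma exists_posDef_trace_inv_pow_four_eq_one_conj_eq_card_smul [Nonempty n] :
    ∃ σ : Matrix n n ℂ, σ.PosDef ∧ ((σ ^ 4)⁻¹).trace = 1 ∧
      ∀ M, σ ^ 2 * M * σ ^ 2 = (Fintype.card n : ℂ) • M := by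
  have hd : (0 : ℝ) < Fintype.card n := by exact_mod_cast Fintype.card_pos
  set c : ℝ := (Fintype.card n : ℝ) ^ (4⁻¹ : ℝ)
  have hc4 : (c : ℂ) ^ 4 = Fintype.card n := by
    rw [← Complex.ofReal_pow, ← Real.rpow_natCast, ← Real.rpow_mul hd.le]
    norm_num
  have hpow (k : ℕ) : ((c : ℂ) • (1 : Matrix n n ℂ)) ^ k = (c : ℂ) ^ k • 1 := by
    rw [smul_pow, one_pow]
  have hd' : (Fintype.card n : ℂ) ≠ 0 := by exact_mod_cast hd.ne'
  refine ⟨(c : ℂ) • 1, PosDef.one.smul (Complex.zero_lt_real.mpr (by positivity)), ?_,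
    fun M => ?_⟩
  · have hinv : ((Fintype.card n : ℂ) • (1 : Matrix n n ℂ))⁻¹ = (Fintype.card n : ℂ)⁻¹ • 1 :=
      inv_eq_right_inv (by rw [smul_mul_smul_comm, one_mul, mul_inv_cancel₀ hd', one_smul])
    rw [hpow, hc4, hinv, trace_smul, trace_one, smul_eq_mul, inv_mul_cancel₀ hd']
  · rw [hpow, smul_mul_assoc, one_mul, mul_smul_one, smul_smul, ← pow_add, hc4]

variable {X : Type*} [Fintype X]

/-- `σq` parametrizes `σ_B = (σq ^ 4)⁻¹`, so that `σq ^ 2 = σ_B^{-1/2}`. -/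
noncomputable def condMinEntropy (P : X → ℝ) (ρB : X → Matrix n n ℂ) : ℝ :=
  sSup { h : ℝ | ∃ σq : Matrix n n ℂ, σq.PosDef ∧ ((σq ^ 4)⁻¹).trace = 1 ∧
    h = - Real.logb 2 (⨆ x, lamMax ((P x : ℂ) • (σq ^ 2 * ρB x * σq ^ 2))) }

lemma div_card_le_iSup_lamMax_smul_conj [Nonempty n] {P : X → ℝ} (hP0 : ∀ x, 0 ≤ P x)
    {ρB : X → Matrix n n ℂ} (hρ : ∀ x, (ρB x).PosSemidef) (hρtr : ∀ x, (ρB x).trace = 1)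
    (x₀ : X) {σ : Matrix n n ℂ} (hσ : σ.PosDef) (hσtr : ((σ ^ 4)⁻¹).trace = 1) :
    P x₀ / Fintype.card n ≤ ⨆ x, lamMax ((P x : ℂ) • (σ ^ 2 * ρB x * σ ^ 2)) :=
  (div_card_le_lamMax_smul_conj (hP0 x₀) (hρ x₀) (hρtr x₀) hσ hσtr).trans <|
    le_ciSup (f := fun x => lamMax ((P x : ℂ) • (σ ^ 2 * ρB x * σ ^ 2)))
      (Set.finite_range _).bddAbove x₀

lemma le_condMinEntropy [Nonempty n] {P : X → ℝ} (hP0 : ∀ x, 0 ≤ P x)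
    {ρB : X → Matrix n n ℂ} (hρ : ∀ x, (ρB x).PosSemidef) (hρtr : ∀ x, (ρB x).trace = 1)
    {x₀ : X} (hx₀ : 0 < P x₀) {σ : Matrix n n ℂ} (hσ : σ.PosDef) (hσtr : ((σ ^ 4)⁻¹).trace = 1) :
    - Real.logb 2 (⨆ x, lamMax ((P x : ℂ) • (σ ^ 2 * ρB x * σ ^ 2))) ≤ condMinEntropy P ρB := by
  have hlower : 0 < P x₀ / Fintype.card n := div_pos hx₀ (by exact_mod_cast Fintype.card_pos)
  refine le_csSup ⟨- Real.logb 2 (P x₀ / Fintype.card n), ?_⟩ ⟨σ, hσ, hσtr, rfl⟩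
  rintro _ ⟨σ', hσ', hσ'tr, rfl⟩
  exact neg_le_neg <| Real.logb_le_logb_of_le one_lt_two hlower <|
    div_card_le_iSup_lamMax_smul_conj hP0 hρ hρtr x₀ hσ' hσ'tr

end MinEntropy

theorem classical_min_entropy_bound_general {X : Type*} [Fintype X] {d : ℕ}
    (hd : 0 < d)
    (P : X → ℝ) (hP0 : ∀ x, 0 ≤ P x) (hP1 : ∑ x, P x = 1)
    (ρB : X → Matrix (Fin d) (Fin d) ℂ)
    (hρ : ∀ x, (ρB x).PosSemidef) (hρtr : ∀ x, (ρB x).trace = 1) :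
    (- Real.logb 2 (⨆ x, P x)) - Real.logb 2 d
      ≤ sSup { h : ℝ | ∃ σq : Matrix (Fin d) (Fin d) ℂ, σq.PosDef ∧
          ((σq ^ 4)⁻¹).trace = 1 ∧
          h = - Real.logb 2 (⨆ x, lamMax ((P x : ℂ) • (σq ^ 2 * ρB x * σq ^ 2))) } := by
  have : Nonempty (Fin d) := Fin.pos_iff_nonempty.mp hd
  obtain ⟨x₀, -, hx₀⟩ : ∃ x ∈ Finset.univ, (0 : X → ℝ) x < P x :=
    Finset.exists_lt_of_sum_lt (by simp [hP1])
  have : Nonempty X := ⟨x₀⟩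
  obtain ⟨σ, hσ, hσtr, hconj⟩ :=
    exists_posDef_trace_inv_pow_four_eq_one_conj_eq_card_smul (n := Fin d)
  have hd' : (0 : ℝ) < d := by exact_mod_cast hd
  have hpos : 0 < ⨆ x, lamMax ((P x : ℂ) • (σ ^ 2 * ρB x * σ ^ 2)) :=
    (div_pos hx₀ (by simpa using hd')).trans_le
      (div_card_le_iSup_lamMax_smul_conj hP0 hρ hρtr x₀ hσ hσtr)
  have hPsup : P x₀ ≤ ⨆ x, P x := le_ciSup (Set.finite_range P).bddAbove x₀
  have hle : ⨆ x, lamMax ((P x : ℂ) • (σ ^ 2 * ρB x * σ ^ 2)) ≤ (⨆ x, P x) * d := by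
    refine ciSup_le fun x => ?_
    rw [hconj, smul_smul, Fintype.card_fin]
    exact_mod_cast (lamMax_smul_le (mul_nonneg (hP0 x) hd'.le) (hρ x) (hρtr x)).trans <|
      mul_le_mul_of_nonneg_right (le_ciSup (Set.finite_range P).bddAbove x) hd'.le
  calc - Real.logb 2 (⨆ x, P x) - Real.logb 2 d = - Real.logb 2 ((⨆ x, P x) * d) := by
        rw [Real.logb_mul (hx₀.trans_le hPsup).ne' hd'.ne']; ring
    _ ≤ _ := neg_le_neg (Real.logb_le_logb_of_le one_lt_two hpos hle)
    _ ≤ _ := le_condMinEntropy hP0 hρ hρtr hx₀ hσ hσtr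

/-- `H_∞(X) - log dim(H_B) ≤ H_∞(ρ_XB|B)` for a state classical on `H_X`, where the
conditional min-entropy is the sup over normalized invertible `σ_B = (σq^4)⁻¹` of
`-log₂ max_x λ_max(P_X(x) σ_B^{-1/2} ρ_B^x σ_B^{-1/2})`. -/
theorem classical_min_entropy_bound {X : Type*} [Fintype X] [Nonempty X] {d : ℕ}
    (hd : 0 < d)
    (P : X → ℝ) (hP0 : ∀ x, 0 ≤ P x) (hP1 : ∑ x, P x = 1)
    (ρB : X → Matrix (Fin d) (Fin d) ℂ)
    (hρ : ∀ x, (ρB x).PosSemidef) (hρtr : ∀ x, (ρB x).trace = 1) :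
    (- Real.logb 2 (⨆ x, P x)) - Real.logb 2 d
      ≤ sSup { h : ℝ | ∃ σq : Matrix (Fin d) (Fin d) ℂ, σq.PosDef ∧
          ((σq ^ 4)⁻¹).trace = 1 ∧
          h = - Real.logb 2 (⨆ x, lamMax ((P x : ℂ) • (σq ^ 2 * ρB x * σq ^ 2))) } :=
  classical_min_entropy_bound_general hd P hP0 hP1 ρB hρ hρtr
end
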